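/- Let ⟨G,p,w⟩ be a game graph with priority function p and integer weight function w, let ε = 1/(|Q|+1), and let σ be a player-1 strategy with finite memory such that every cycle C in the product graph G_σ reachable from the initial state ⟨m₀,q₀⟩ has even minimal priority and nonnegative sum of weights with respect to w + ε (equivalently, (|Q|+1)·Σ_{e∈C} w(e) + |C| ≥ 0). Then every outcome ρ of σ from q₀ satisfies the parity condition and has mean-payoff value MP(w,ρ) ≥ −ε. -/

import Mathlib

variable {Q : Type*}

/-- A play: an infinite path in the edge relation `E`. -/
def IsPlay (E : Q → Q → Prop) (ρ : ℕ → Q) : Prop :=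
  ∀ i, E (ρ i) (ρ (i + 1))

/-- Energy level of the prefix of length `n` of `ρ`. -/
def EL (w : Q → Q → ℤ) (ρ : ℕ → Q) (n : ℕ) : ℤ :=
  ∑ i ∈ Finset.range n, w (ρ i) (ρ (i + 1))

/-- Energy condition with initial credit `c₀`. -/
def EnergyCond (w : Q → Q → ℤ) (c₀ : ℕ) (ρ : ℕ → Q) : Prop :=
  ∀ n, 0 ≤ (c₀ : ℤ) + EL w ρ n

/-- The state `q` occurs infinitely often in `ρ`. -/
def InfOften (ρ : ℕ → Q) (q : Q) : Prop :=
  ∀ N, ∃ n, N ≤ n ∧ ρ n = q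

/-- Parity condition: the minimum priority occurring infinitely often is even. -/
def ParityCond (p : Q → ℕ) (ρ : ℕ → Q) : Prop :=
  ∃ q, InfOften ρ q ∧ Even (p q) ∧ ∀ q', InfOften ρ q' → p q ≤ p q'

/-- Memory state of the transducer after reading `ρ 0, …, ρ (i-1)`. -/
def MemRun {M : Type*} (αu : M → Q → M) (m₀ : M) (ρ : ℕ → Q) : ℕ → M
  | 0 => m₀
  | i + 1 => αu (MemRun αu m₀ ρ i) (ρ i)

/-- An outcome of the finite-memory strategy given by the transducer `⟨M, m₀, αu, αn⟩`. -/
def TransOutcome {M : Type*} (Q1 : Set Q) (E : Q → Q → Prop)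
    (αu : M → Q → M) (αn : M → Q → Q) (m₀ : M) (q₀ : Q) (ρ : ℕ → Q) : Prop :=
  ρ 0 = q₀ ∧ IsPlay E ρ ∧
    ∀ i, ρ i ∈ Q1 → ρ (i + 1) = αn (MemRun αu m₀ ρ i) (ρ i)

/-- The product graph `G_σ` of the game with the transducer `⟨M, m₀, αu, αn⟩`. -/
def EProd {M : Type*} (Q1 : Set Q) (E : Q → Q → Prop)
    (αu : M → Q → M) (αn : M → Q → Q) : M × Q → M × Q → Prop :=
  fun x y => y.1 = αu x.1 x.2 ∧
    ((x.2 ∈ Q1 ∧ y.2 = αn x.1 x.2) ∨ (x.2 ∉ Q1 ∧ E x.2 y.2))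

/-!
The outcome `ρ` lifts to the path `n ↦ (MemRun n, ρ n)` of `G_σ` from `⟨m₀,q₀⟩`, and every segment of
that path between two visits of one state is a reachable cycle.

Parity: from some time `N` on, the path only visits states it visits infinitely often, so a
segment from `N` back to its state, long enough to meet every state visited after `N`, is a cycle
whose minimal priority is the least priority seen infinitely often.

Mean payoff: for the weights `(|Q|+1)·w + 1` every such cycle has nonnegative weight. Jumping back
from any time to the first visit of the current state therefore never increases the prefix sum,
and only finitely many first visits exist, so `(|Q|+1)·EL(n) + n` is bounded below uniformly in
`n`; dividing by `(|Q|+1)·n` gives `MP ≥ -1/(|Q|+1)`.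
-/
open Filter Finset

section Recurrence

variable {α β : Type*} {c : ℕ → α}

theorem infOften_iff_frequently {a : α} : InfOften c a ↔ ∃ᶠ n in atTop, c n = a :=
  frequently_atTop.symm

theorem InfOften.comp {a : α} (f : α → β) (h : InfOften c a) : InfOften (f ∘ c) (f a) :=
  fun N => (h N).imp fun _ ⟨hn, hca⟩ => ⟨hn, congrArg f hca⟩

theorem InfOften.exists_of_comp [Finite α] {f : α → β} {b : β} (h : InfOften (f ∘ c) b) :
    ∃ a, f a = b ∧ InfOften c a := by
  have hfreq : ∃ᶠ n in atTop, ∃ a, c n = a ∧ f a = b :=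
    (infOften_iff_frequently.1 h).mono fun n hn => ⟨c n, rfl, hn⟩
  obtain ⟨a, ha⟩ := frequently_exists.1 hfreq
  obtain ⟨_, -, hfa⟩ := ha.exists
  exact ⟨a, hfa, infOften_iff_frequently.2 (ha.mono fun _ => And.left)⟩

theorem ParityCond.of_comp [Finite α] {p : β → ℕ} {f : α → β} (h : ParityCond (p ∘ f) c) :
    ParityCond p (f ∘ c) := by
  obtain ⟨a, ha, heven, hmin⟩ := h
  refine ⟨f a, ha.comp f, heven, fun b hb => ?_⟩
  obtain ⟨a', rfl, ha'⟩ := hb.exists_of_comp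
  exact hmin a' ha'

theorem eventually_infOften [Finite α] (c : ℕ → α) : ∀ᶠ n in atTop, InfOften c (c n) := by
  have h : ∀ a, ∀ᶠ n in atTop, c n = a → InfOften c a := by
    intro a
    by_cases ha : InfOften c a
    · exact Eventually.of_forall fun _ _ => ha
    · rw [infOften_iff_frequently, not_frequently] at ha
      exact ha.mono fun _ hn hca => absurd hca hn
  exact (eventually_all.2 h).mono fun n hn => hn (c n) rfl

theorem exists_recurrent_window [Finite α] (c : ℕ → α) :
    ∃ N k, 0 < k ∧ c N = c (N + k) ∧ (∀ j ≤ k, InfOften c (c (N + j))) ∧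
      ∀ n ≥ N, ∃ j ≤ k, c (N + j) = c n := by
  obtain ⟨N, hN⟩ := eventually_atTop.1 (eventually_infOften c)
  have hvisit : ∀ a, ∃ t ≥ N, ∀ n ≥ N, c n = a → c t = a := by
    intro a
    by_cases h : ∃ n ≥ N, c n = a
    · obtain ⟨n, hn, hca⟩ := h
      exact ⟨n, hn, fun _ _ _ => hca⟩
    · push Not at h
      exact ⟨N, le_rfl, fun n hn hca => absurd hca (h n hn)⟩
  choose t hNt ht using hvisit
  obtain ⟨T, hT⟩ := Finite.exists_le t
  obtain ⟨n₂, hn₂, hcn₂⟩ := hN N le_rfl (T + 1)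
  have hNT : N ≤ T := (hNt (c N)).trans (hT _)
  refine ⟨N, n₂ - N, by omega, by rw [Nat.add_sub_cancel' (by omega), hcn₂],
    fun j _ => hN _ (Nat.le_add_right _ _), fun n hn => ⟨t (c n) - N, ?_, ?_⟩⟩
  · have := hT (c n); omega
  · rw [Nat.add_sub_cancel' (hNt _)]
    exact ht _ n hn rfl

theorem parityCond_of_forall_cycle [Finite α] (π : α → ℕ)
    (h : ∀ i k, 0 < k → c i = c (i + k) → ∃ j ∈ range (k + 1), Even (π (c (i + j))) ∧
      ∀ l ∈ range (k + 1), π (c (i + j)) ≤ π (c (i + l))) :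
    ParityCond π c := by
  obtain ⟨N, k, hk, hcyc, hrec, hcover⟩ := exists_recurrent_window c
  obtain ⟨j, hj, heven, hmin⟩ := h N k hk hcyc
  refine ⟨c (N + j), hrec j (Nat.lt_succ_iff.1 (mem_range.1 hj)), heven, fun a ha => ?_⟩
  obtain ⟨n, hn, rfl⟩ := ha N
  obtain ⟨l, hl, hcl⟩ := hcover n hn
  exact hcl ▸ hmin l (mem_range.2 (Nat.lt_succ_of_le hl))

end Recurrence

theorem card_image_mul_le_sum_of_closed_nonneg {α : Type*} [DecidableEq α] (d : ℕ → α)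
    (u : ℕ → ℤ) {b : ℤ} (hb : b ≤ 0) (hu : ∀ t, b ≤ u t)
    (hclosed : ∀ i j, i < j → d i = d j → 0 ≤ ∑ t ∈ Ico i j, u t) (n : ℕ) :
    #((range n).image d) * b ≤ ∑ t ∈ range n, u t := by
  have hfirst : ∀ n, ∃ m ≤ n, d n ∉ (range m).image d ∧
      ∑ t ∈ range m, u t ≤ ∑ t ∈ range n, u t := by
    intro n
    have hex : ∃ m, d m = d n := ⟨n, rfl⟩
    refine ⟨Nat.find hex, Nat.find_min' hex rfl, ?_, ?_⟩
    · simp only [mem_image, mem_range, not_exists, not_and]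
      exact fun t ht => Nat.find_min hex ht
    · rcases (Nat.find_min' hex rfl).lt_or_eq with hlt | heq
      · rw [← sum_range_add_sum_Ico _ hlt.le]
        linarith [hclosed _ n hlt (Nat.find_spec hex)]
      · rw [heq]
  -- Jump back from `n` to the first visit `m + 1` of `d n` (the sum does not grow), step to `m`
  -- (losing at most `-b`) and jump back to the first visit `m'` of `d m`: as `d m` does not occur
  -- before `m'`, fewer distinct states occur before `m'` than before `n`.
  induction n using Nat.strong_induction_on with
  | _ n ih =>
  obtain ⟨m, hmn, -, hle⟩ := hfirst n
  rcases m with _ | m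
  · rw [sum_range_zero] at hle
    nlinarith [(#((range n).image d)).cast_nonneg (α := ℤ)]
  · obtain ⟨m', hm'm, hnew, hle'⟩ := hfirst m
    have hsub : insert (d m) ((range m').image d) ⊆ (range n).image d := by
      refine insert_subset (mem_image_of_mem d (mem_range.2 (by omega))) ?_
      exact image_subset_image (range_subset_range.2 (by omega))
    have hcard : #((range m').image d) + 1 ≤ #((range n).image d) :=
      card_insert_of_notMem hnew ▸ card_le_card hsub
    have hcard' : #((range n).image d) * b ≤ ((#((range m').image d) : ℤ) + 1) * b :=
      mul_le_mul_of_nonpos_right (by exact_mod_cast hcard) hb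
    rw [sum_range_succ] at hle
    nlinarith [ih m' (by omega), hu m]

theorem exists_le_sum_range_of_closed_nonneg {α : Type*} [Finite α] (d : ℕ → α)
    (u : α → α → ℤ) (hclosed : ∀ i j, i < j → d i = d j →
      0 ≤ ∑ t ∈ Ico i j, u (d t) (d (t + 1))) :
    ∃ B, ∀ n, B ≤ ∑ t ∈ range n, u (d t) (d (t + 1)) := by
  classical
  have := Fintype.ofFinite α
  obtain ⟨b, hb⟩ := Finite.exists_ge fun e : α × α => u e.1 e.2
  refine ⟨Fintype.card α * min b 0, fun n => le_trans ?_
    (card_image_mul_le_sum_of_closed_nonneg d _ (min_le_right b 0)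
      (fun t => (min_le_left b 0).trans (hb (d t, d (t + 1)))) hclosed n)⟩
  exact mul_le_mul_of_nonpos_right (by exact_mod_cast card_le_univ _) (min_le_right b 0)

theorem neg_inv_le_liminf_div (a : ℕ → ℝ) {K B : ℝ} (hK : 0 < K)
    (h : ∀ n : ℕ, B ≤ K * a n + n) :
    -(1 / K) ≤ liminf (fun n : ℕ => a n / n) atTop := by
  by_cases hco : IsCoboundedUnder (· ≥ ·) atTop (fun n : ℕ => a n / n)
  · have hlim : Tendsto (fun n : ℕ => B / K / n - 1 / K) atTop (nhds (-(1 / K))) := by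
      simpa using (tendsto_const_div_atTop_nhds_zero_nat (B / K)).sub_const (1 / K)
    have hle : ∀ᶠ n : ℕ in atTop, B / K / n - 1 / K ≤ a n / n := by
      filter_upwards [eventually_gt_atTop 0] with n hn
      have hn' : (0 : ℝ) < n := by exact_mod_cast hn
      rw [show B / K / n - 1 / K = (B - n) / K / n by field_simp,
        div_le_div_iff_of_pos_right hn', div_le_iff₀' hK]
      linarith [h n]
    calc -(1 / K) = liminf (fun n : ℕ => B / K / n - 1 / K) atTop := hlim.liminf_eq.symm
      _ ≤ _ := liminf_le_liminf hle hlim.isBoundedUnder_ge hco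
  · -- `liminf` takes the junk value `0` here
    rw [Real.liminf_of_not_isCoboundedUnder hco]
    exact neg_nonpos.2 (by positivity)

section ProductGraph

variable {M : Type*} {Q1 : Set Q} {E : Q → Q → Prop} {αu : M → Q → M} {αn : M → Q → Q}
  {m₀ : M} {q₀ : Q} {ρ : ℕ → Q}

def prodRun (αu : M → Q → M) (m₀ : M) (ρ : ℕ → Q) (n : ℕ) : M × Q :=
  (MemRun αu m₀ ρ n, ρ n)

theorem TransOutcome.eProd_prodRun (hρ : TransOutcome Q1 E αu αn m₀ q₀ ρ) (n : ℕ) :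
    EProd Q1 E αu αn (prodRun αu m₀ ρ n) (prodRun αu m₀ ρ (n + 1)) := by
  refine ⟨rfl, ?_⟩
  by_cases hq : ρ n ∈ Q1
  · exact Or.inl ⟨hq, hρ.2.2 n hq⟩
  · exact Or.inr ⟨hq, hρ.2.1 n⟩

theorem TransOutcome.reflTransGen_prodRun (hρ : TransOutcome Q1 E αu αn m₀ q₀ ρ) (n : ℕ) :
    Relation.ReflTransGen (EProd Q1 E αu αn) (m₀, q₀) (prodRun αu m₀ ρ n) := by
  induction n with
  | zero => rw [prodRun, MemRun, hρ.1]
  | succ n ih => exact ih.tail (hρ.eProd_prodRun n)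

end ProductGraph

theorem stmt16_general {Q : Type*} [Fintype Q] (Q1 : Set Q) (E : Q → Q → Prop)
    (p : Q → ℕ) (w : Q → Q → ℤ)
    (M : Type*) [Fintype M] (m₀ : M) (αu : M → Q → M) (αn : M → Q → Q)
    (q₀ : Q)
    (hcyc : ∀ (k : ℕ) (c : ℕ → M × Q), 0 < k → c 0 = c k →
      (∀ j < k, EProd Q1 E αu αn (c j) (c (j + 1))) →
      (∀ j ≤ k, Relation.ReflTransGen (EProd Q1 E αu αn) (m₀, q₀) (c j)) →
      (0 ≤ ((Fintype.card Q : ℤ) + 1) *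
          (∑ j ∈ Finset.range k, w (c j).2 (c (j + 1)).2) + (k : ℤ) ∧
        ∃ j ∈ Finset.range (k + 1), Even (p (c j).2) ∧
          ∀ l ∈ Finset.range (k + 1), p (c j).2 ≤ p (c l).2)) :
    ∀ ρ, TransOutcome Q1 E αu αn m₀ q₀ ρ →
      ParityCond p ρ ∧
        -(1 / ((Fintype.card Q : ℝ) + 1)) ≤
          Filter.liminf (fun n : ℕ => (EL w ρ n : ℝ) / (n : ℝ)) Filter.atTop := by
  intro ρ hρ
  set c := prodRun αu m₀ ρ
  have hcycle := fun i k (hk : 0 < k) (hck : c i = c (i + k)) =>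
    hcyc k (fun t => c (i + t)) hk hck (fun j _ => hρ.eProd_prodRun (i + j))
      (fun j _ => hρ.reflTransGen_prodRun (i + j))
  refine ⟨(parityCond_of_forall_cycle (p ∘ Prod.snd) fun i k hk hck =>
    (hcycle i k hk hck).2).of_comp, ?_⟩
  obtain ⟨B, hB⟩ := exists_le_sum_range_of_closed_nonneg c
    (fun x y => ((Fintype.card Q : ℤ) + 1) * w x.2 y.2 + 1) fun i j hij hcij => by
      have hnonneg := (hcycle i (j - i) (by omega) (by rwa [Nat.add_sub_cancel' hij.le])).1
      rw [sum_Ico_eq_sum_range, sum_add_distrib, ← mul_sum, sum_const, card_range]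
      simpa [add_assoc, c, prodRun] using hnonneg
  refine neg_inv_le_liminf_div _ (B := B) (by positivity) fun n => ?_
  have hBn := hB n
  rw [sum_add_distrib, ← mul_sum, sum_const, card_range] at hBn
  simpa [EL, c, prodRun] using (Int.cast_le (R := ℝ)).2 hBn

/-- with `ε = 1/(|Q|+1)`, if `σ` is a finite-memory strategy such that
every cycle `C` of the product graph `G_σ` reachable from `⟨m₀,q₀⟩` has even minimal
priority and nonnegative sum of weights with respect to `w + ε` (i.e.
`(|Q|+1)·Σ_{e∈C} w(e) + |C| ≥ 0`), then every outcome `ρ` of `σ` from `q₀` satisfies the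
parity condition and has mean-payoff value `MP(w,ρ) ≥ −ε`. -/
theorem stmt16 {Q : Type*} [Fintype Q] (Q1 : Set Q) (E : Q → Q → Prop)
    (hE : ∀ q, ∃ q', E q q') (p : Q → ℕ) (w : Q → Q → ℤ)
    (M : Type*) [Fintype M] (m₀ : M) (αu : M → Q → M) (αn : M → Q → Q)
    (hvalid : ∀ mem s, s ∈ Q1 → E s (αn mem s))
    (q₀ : Q)
    (hcyc : ∀ (k : ℕ) (c : ℕ → M × Q), 0 < k → c 0 = c k →
      (∀ j < k, EProd Q1 E αu αn (c j) (c (j + 1))) →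
      (∀ j ≤ k, Relation.ReflTransGen (EProd Q1 E αu αn) (m₀, q₀) (c j)) →
      (0 ≤ ((Fintype.card Q : ℤ) + 1) *
          (∑ j ∈ Finset.range k, w (c j).2 (c (j + 1)).2) + (k : ℤ) ∧
        ∃ j ∈ Finset.range (k + 1), Even (p (c j).2) ∧
          ∀ l ∈ Finset.range (k + 1), p (c j).2 ≤ p (c l).2)) :
    ∀ ρ, TransOutcome Q1 E αu αn m₀ q₀ ρ →
      ParityCond p ρ ∧
        -(1 / ((Fintype.card Q : ℝ) + 1)) ≤
          Filter.liminf (fun n : ℕ => (EL w ρ n : ℝ) / (n : ℝ)) Filter.atTop :=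
  stmt16_general Q1 E p w M m₀ αu αn q₀ hcyc
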